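/- Let J ⊆ {1,…,n} be a nonempty index set and let x ∈ R^n. If x' = x + I_J A_J†(b − Ax), then ‖x' − x⋆‖²_{AᵀA} = ‖x − x⋆‖²_{AᵀA} − ‖(A_J†)ᵀ A_Jᵀ A(x − x⋆)‖₂². -/

import Mathlib

noncomputable section
open Matrix

/-- Squared Euclidean norm `‖v‖₂²` of a vector. -/
def norm2 {ι : Type*} [Fintype ι] (v : ι → ℝ) : ℝ := ∑ i, (v i) ^ 2

/-- Squared Frobenius norm `‖A‖_F²` of a matrix. -/
def frob2 {ι κ : Type*} [Fintype ι] [Fintype κ] (A : Matrix ι κ ℝ) : ℝ :=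
  ∑ i, ∑ j, (A i j) ^ 2

/-- Squared largest singular value `σ_max(B)²`, i.e. the largest eigenvalue of `Bᵀ * B`. -/
def sigmaMaxSq {ι κ : Type*} [Fintype ι] [Fintype κ] [DecidableEq κ]
    (B : Matrix ι κ ℝ) : ℝ :=
  sSup (Set.range (Matrix.isHermitian_conjTranspose_mul_self B).eigenvalues)

/-- Squared smallest singular value `σ_min(B)²`, i.e. the smallest eigenvalue of `Bᵀ * B`. -/
def sigmaMinSq {ι κ : Type*} [Fintype ι] [Fintype κ] [DecidableEq κ]
    (B : Matrix ι κ ℝ) : ℝ :=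
  sInf (Set.range (Matrix.isHermitian_conjTranspose_mul_self B).eigenvalues)

/-- Squared Euclidean norm `‖A_(j)‖₂²` of the `j`-th column of `A`. -/
def col2 {m n : ℕ} (A : Matrix (Fin m) (Fin n) ℝ) (j : Fin n) : ℝ := ∑ i, (A i j) ^ 2

/-- `A` has full column rank: its columns are linearly independent. -/
def FullColRank {m n : ℕ} (A : Matrix (Fin m) (Fin n) ℝ) : Prop :=
  LinearIndependent ℝ fun j : Fin n => (fun i => A i j : Fin m → ℝ)

/-- `max_{1 ≤ j ≤ n} |A_(j)ᵀ r|² / ‖A_(j)‖₂²`. -/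
def maxRatio {m n : ℕ} (A : Matrix (Fin m) (Fin n) ℝ) (r : Fin m → ℝ) : ℝ :=
  ⨆ j : Fin n, ((Aᵀ *ᵥ r) j) ^ 2 / col2 A j

/-- The greedy parameter
`ε = (θ/‖Aᵀr‖₂²)·max_j |A_(j)ᵀ r|²/‖A_(j)‖₂² + (1−θ)/‖A‖_F²`. -/
def eps {m n : ℕ} (A : Matrix (Fin m) (Fin n) ℝ) (r : Fin m → ℝ) (θ : ℝ) : ℝ :=
  θ / norm2 (Aᵀ *ᵥ r) * maxRatio A r + (1 - θ) / frob2 A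

open Classical in
/-- The greedy index set `J = { j : |A_(j)ᵀ r|² ≥ ε ‖Aᵀr‖₂² ‖A_(j)‖₂² }`. -/
def greedySet {m n : ℕ} (A : Matrix (Fin m) (Fin n) ℝ) (r : Fin m → ℝ) (θ : ℝ) :
    Finset (Fin n) :=
  Finset.univ.filter fun j =>
    eps A r θ * norm2 (Aᵀ *ᵥ r) * col2 A j ≤ ((Aᵀ *ᵥ r) j) ^ 2

/-- The column submatrix `A_J` of `A`, with columns indexed by `J`. -/
def subCols {m n : ℕ} (A : Matrix (Fin m) (Fin n) ℝ) (J : Finset (Fin n)) :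
    Matrix (Fin m) {j // j ∈ J} ℝ :=
  A.submatrix id fun j => (j : Fin n)

/-- The submatrix `I_J` of the `n × n` identity with columns indexed by `J`. -/
def subId {n : ℕ} (J : Finset (Fin n)) : Matrix (Fin n) {j // j ∈ J} ℝ :=
  (1 : Matrix (Fin n) (Fin n) ℝ).submatrix id fun j => (j : Fin n)

/-- Moore–Penrose pseudoinverse of a full-column-rank matrix: `B† = (BᵀB)⁻¹Bᵀ`. -/
def pinv {ι κ : Type*} [Fintype ι] [Fintype κ] [DecidableEq κ] (B : Matrix ι κ ℝ) :
    Matrix κ ι ℝ :=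
  (Bᵀ * B)⁻¹ * Bᵀ

/-- The matrix `Ã_J` whose columns are the normalized columns `A_(j)/‖A_(j)‖₂`, `j ∈ J`. -/
def tildeA {m n : ℕ} (A : Matrix (Fin m) (Fin n) ℝ) (J : Finset (Fin n)) :
    Matrix (Fin m) {j // j ∈ J} ℝ :=
  Matrix.of fun i j => A i (j : Fin n) / Real.sqrt (col2 A (j : Fin n))

/-- The matrix `Ĩ_J` whose columns are `e_j/‖A_(j)‖₂`, `j ∈ J`. -/
def tildeI {m n : ℕ} (A : Matrix (Fin m) (Fin n) ℝ) (J : Finset (Fin n)) :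
    Matrix (Fin n) {j // j ∈ J} ℝ :=
  Matrix.of fun i j => (if i = (j : Fin n) then 1 else 0) / Real.sqrt (col2 A (j : Fin n))

/-! With `u = A (x - x⋆)` and `P = A_J A_J†`, the normal equation turns `A_Jᵀ (b - A x)` into
`-A_Jᵀ u`, so `A (x' - x⋆) = u - P u`, while `(A_J†)ᵀ A_Jᵀ = Pᵀ = P`. Since `P` is symmetric and
idempotent, `u - P u ⟂ P u`, and the identity is Pythagoras: `‖u - P u‖² = ‖u‖² - ‖P u‖²`. -/

section OrthogonalProjection

variable {ι : Type*} [Fintype ι]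

lemma norm2_eq_dotProduct (v : ι → ℝ) : norm2 v = v ⬝ᵥ v := by
  simp only [norm2, dotProduct, sq]

lemma norm2_sub_mulVec_of_isSymm_of_isIdempotentElem {P : Matrix ι ι ℝ} (hsymm : P.IsSymm)
    (hidem : IsIdempotentElem P) (u : ι → ℝ) :
    norm2 (u - P *ᵥ u) = norm2 u - norm2 (P *ᵥ u) := by
  have hPu : (P *ᵥ u) ⬝ᵥ (P *ᵥ u) = (P *ᵥ u) ⬝ᵥ u := by
    rw [dotProduct_mulVec, ← mulVec_transpose, hsymm.eq, mulVec_mulVec, hidem.eq]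
  simp only [norm2_eq_dotProduct, sub_dotProduct, dotProduct_sub, hPu, dotProduct_comm u]
  ring

end OrthogonalProjection

lemma nonsing_inv_mul_mul_nonsing_inv {κ R : Type*} [Fintype κ] [DecidableEq κ] [CommRing R]
    (M : Matrix κ κ R) : M⁻¹ * M * M⁻¹ = M⁻¹ := by
  rcases nonsing_inv_cancel_or_zero M with ⟨hinv, -⟩ | hzero
  · rw [hinv, Matrix.one_mul]
  · rw [hzero, Matrix.mul_zero]

section Pseudoinverse

variable {ι κ : Type*} [Fintype ι] [Fintype κ] [DecidableEq κ]

lemma isSymm_mul_pinv (B : Matrix ι κ ℝ) : (B * pinv B).IsSymm := by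
  have hsymm : (Bᵀ * B)ᵀ = Bᵀ * B := by rw [transpose_mul, transpose_transpose]
  rw [IsSymm, pinv, transpose_mul, transpose_mul, transpose_transpose, transpose_nonsing_inv,
    hsymm, Matrix.mul_assoc]

/- `B * pinv B` is the orthogonal projection onto the column space of `B` when `Bᵀ * B` is
invertible, and `0` otherwise, since `M⁻¹ = 0` for a singular `M`. -/
lemma isIdempotentElem_mul_pinv (B : Matrix ι κ ℝ) : IsIdempotentElem (B * pinv B) := by
  calc B * pinv B * (B * pinv B)
      = B * ((Bᵀ * B)⁻¹ * (Bᵀ * B) * (Bᵀ * B)⁻¹) * Bᵀ := by simp only [pinv, Matrix.mul_assoc]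
    _ = B * pinv B := by rw [nonsing_inv_mul_mul_nonsing_inv, pinv, Matrix.mul_assoc]

end Pseudoinverse

lemma mul_subId {m n : ℕ} (A : Matrix (Fin m) (Fin n) ℝ) (J : Finset (Fin n)) :
    A * subId J = subCols A J :=
  mul_submatrix_one (Equiv.refl _) Subtype.val A

lemma transpose_mulVec_sub_eq_of_normal_eq {ι κ R : Type*} [Fintype ι] [Fintype κ] [CommRing R]
    (A : Matrix ι κ R) {b : ι → R} {xstar : κ → R} (hstar : (Aᵀ * A) *ᵥ xstar = Aᵀ *ᵥ b)
    (x : κ → R) : Aᵀ *ᵥ (b - A *ᵥ x) = -(Aᵀ *ᵥ (A *ᵥ (x - xstar))) := by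
  rw [mulVec_sub, ← hstar, ← mulVec_mulVec, mulVec_sub, mulVec_sub, neg_sub]

theorem stmt3_general {m n : ℕ} (A : Matrix (Fin m) (Fin n) ℝ)
    (b : Fin m → ℝ) (xstar : Fin n → ℝ) (hstar : (Aᵀ * A) *ᵥ xstar = Aᵀ *ᵥ b)
    (J : Finset (Fin n)) (x x' : Fin n → ℝ)
    (hx' : x' = x + subId J *ᵥ (pinv (subCols A J) *ᵥ (b - A *ᵥ x))) :
    norm2 (A *ᵥ (x' - xstar)) =
      norm2 (A *ᵥ (x - xstar)) -
        norm2 ((pinv (subCols A J))ᵀ *ᵥ ((subCols A J)ᵀ *ᵥ (A *ᵥ (x - xstar)))) := by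
  set B := subCols A J
  set u := A *ᵥ (x - xstar)
  set P := B * pinv B
  have hBt : Bᵀ = (subId J)ᵀ * Aᵀ := by rw [← transpose_mul, mul_subId]
  have hBt_res : Bᵀ *ᵥ (b - A *ᵥ x) = -(Bᵀ *ᵥ u) := by
    rw [hBt, ← mulVec_mulVec, ← mulVec_mulVec, transpose_mulVec_sub_eq_of_normal_eq A hstar,
      mulVec_neg]
  have hpinv_res : pinv B *ᵥ (b - A *ᵥ x) = -(pinv B *ᵥ u) := by
    rw [pinv, ← mulVec_mulVec, ← mulVec_mulVec, hBt_res, mulVec_neg]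
  have hres : A *ᵥ (x' - xstar) = u - P *ᵥ u := by
    rw [hx', hpinv_res, add_sub_right_comm, mulVec_add, mulVec_neg, mulVec_neg, mulVec_mulVec,
      mulVec_mulVec, mul_subId, ← sub_eq_add_neg]
  have hproj : (pinv B)ᵀ *ᵥ (Bᵀ *ᵥ u) = P *ᵥ u := by
    rw [mulVec_mulVec, ← transpose_mul, (isSymm_mul_pinv B).eq]
  rw [hres, hproj, norm2_sub_mulVec_of_isSymm_of_isIdempotentElem (isSymm_mul_pinv B)
    (isIdempotentElem_mul_pinv B)]

/-- exact decrease identity for one block Gauss–Seidel update: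
`‖x' − x⋆‖²_{AᵀA} = ‖x − x⋆‖²_{AᵀA} − ‖(A_J†)ᵀ A_Jᵀ A(x − x⋆)‖₂²`. -/
theorem stmt3 {m n : ℕ} (A : Matrix (Fin m) (Fin n) ℝ) (hA : FullColRank A)
    (b : Fin m → ℝ) (xstar : Fin n → ℝ) (hstar : (Aᵀ * A) *ᵥ xstar = Aᵀ *ᵥ b)
    (J : Finset (Fin n)) (hJ : J.Nonempty) (x x' : Fin n → ℝ)
    (hx' : x' = x + subId J *ᵥ (pinv (subCols A J) *ᵥ (b - A *ᵥ x))) :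
    norm2 (A *ᵥ (x' - xstar)) =
      norm2 (A *ᵥ (x - xstar)) -
        norm2 ((pinv (subCols A J))ᵀ *ᵥ ((subCols A J)ᵀ *ᵥ (A *ᵥ (x - xstar)))) :=
  stmt3_general A b xstar hstar J x x' hx'
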